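/- arXiv:2107.07833 — 8 statements merged into one kernel-verified Lean document; each statement's English description precedes it below -/
import Mathlib

section
/- Let f : {0,1}^n → ℝ be an affine function f(x) = c + Σ_i c_i x_i. If Pr[f(x) ∉ {0,1}] < 1/4 (over a uniformly random x ∈ {0,1}^n), then f is one of the functions 0, 1, x_i, or 1 − x_i for some i ∈ [n]. In particular, each c_i ∈ {0, ±1} and at most one c_i is nonzero. -/
/-!
Call `x` bad if `f x ∉ {0, 1}`. Fewer than a quarter of the points are bad, so for any
coordinates `i, j` a union bound over the four bijections `id`, `flip_i`, `flip_j`,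
`flip_i ∘ flip_j` yields a point whose whole square `x, xⁱ, xʲ, xⁱʲ` is good. Along an edge
in direction `i` the affine `f` changes by `± cᵢ`, so `|cᵢ| ∈ {0, 1}`. On a square
`f xⁱʲ + f x = f xⁱ + f xʲ`; if `i ≠ j` and `cᵢ, cⱼ ≠ 0` then `f xⁱ = f xʲ = 1 - f x`, which
forces `f xⁱʲ ∈ {-1, 2}`.
-/

open scoped Classical

open Finset Function

lemma Finset.exists_forall_apply_notMem {α ι : Type*} [Fintype α] [Fintype ι] (B : Finset α)
    (g : ι → α → α) (hg : ∀ k, Injective (g k)) (hB : Fintype.card ι * #B < Fintype.card α) :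
    ∃ x, ∀ k, g k x ∉ B := by
  by_contra! hcover
  have hpre : ∀ k, #{x | g k x ∈ B} ≤ #B := fun k =>
    card_le_card_of_injOn (g k) (fun x hx => (mem_filter.mp hx).2) (hg k).injOn
  have hcov : (univ : Finset α) ⊆ univ.biUnion fun k => {x | g k x ∈ B} := fun x _ => by
    simpa using hcover x
  have := calc Fintype.card α = #(univ : Finset α) := card_univ.symm
    _ ≤ ∑ k, #{x | g k x ∈ B} := (card_le_card hcov).trans card_biUnion_le
    _ ≤ Fintype.card ι * #B := by simpa using sum_le_card_nsmul univ _ _ fun k _ => hpre k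
  omega

section FlipCoord

variable {σ : Type*} [DecidableEq σ]

def flipCoord (i : σ) (x : σ → Bool) : σ → Bool := update x i (!x i)

@[simp] lemma flipCoord_apply_self (i : σ) (x : σ → Bool) : flipCoord i x i = !x i :=
  update_self _ _ _

lemma flipCoord_apply_of_ne {i j : σ} (h : j ≠ i) (x : σ → Bool) : flipCoord i x j = x j :=
  update_of_ne h _ _

lemma flipCoord_involutive (i : σ) : Involutive (flipCoord i) := fun x => by
  ext j
  by_cases h : j = i
  · subst h; simp
  · simp only [flipCoord_apply_of_ne h]

lemma exists_flipCoord_square_notMem [Fintype σ] (B : Finset (σ → Bool))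
    (hB : 4 * #B < Fintype.card (σ → Bool)) (i j : σ) :
    ∃ x, x ∉ B ∧ flipCoord i x ∉ B ∧ flipCoord j x ∉ B ∧ flipCoord i (flipCoord j x) ∉ B := by
  have hinj := fun k : σ => (flipCoord_involutive k).injective
  obtain ⟨x, hx⟩ := B.exists_forall_apply_notMem
    ![id, flipCoord i, flipCoord j, flipCoord i ∘ flipCoord j]
    (fun k => by fin_cases k <;> simp [injective_id, hinj, (hinj i).comp (hinj j)])
    (by simpa using hB)
  exact ⟨x, hx 0, hx 1, hx 2, hx 3⟩

lemma exists_apply_eq_of_flipCoord {p : (σ → Bool) → Prop} {i : σ} {x : σ → Bool}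
    (hx : p x) (hfx : p (flipCoord i x)) (b : Bool) : ∃ y, p y ∧ y i = b := by
  by_cases h : x i = b
  · exact ⟨x, hx, h⟩
  · exact ⟨_, hfx, by rw [flipCoord_apply_self]; exact Bool.not_eq.mpr h⟩

end FlipCoord

section Affine

variable {σ : Type*} [Fintype σ] {f : (σ → Bool) → ℝ} {c : ℝ} {cc : σ → ℝ}
  (hf : ∀ x, f x = c + ∑ i, cc i * if x i then (1:ℝ) else 0)
include hf

lemma affine_eq_of_forall_ne {i : σ} (h : ∀ j ≠ i, cc j = 0) (x : σ → Bool) :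
    f x = c + cc i * if x i then (1:ℝ) else 0 := by
  rw [hf, sum_eq_single i (fun j _ hj => by rw [h j hj, zero_mul]) (by simp)]

variable [DecidableEq σ]

lemma affine_flipCoord_sub (i : σ) (x : σ → Bool) :
    f (flipCoord i x) - f x = if x i then -cc i else cc i := by
  rw [hf, hf, add_sub_add_left_eq_sub, ← sum_sub_distrib, sum_eq_single i]
  · cases h : x i <;> simp [h]
  · intro j _ hj
    simp [flipCoord_apply_of_ne hj]
  · simp

lemma abs_affine_flipCoord_sub (i : σ) (x : σ → Bool) : |f (flipCoord i x) - f x| = |cc i| := by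
  rw [affine_flipCoord_sub hf]
  split_ifs <;> simp

lemma affine_flipCoord_ne_iff (i : σ) (x : σ → Bool) : f (flipCoord i x) ≠ f x ↔ cc i ≠ 0 := by
  rw [← sub_ne_zero, ← abs_ne_zero, abs_affine_flipCoord_sub hf, abs_ne_zero]

lemma affine_flipCoord_flipCoord {i j : σ} (hij : i ≠ j) (x : σ → Bool) :
    f (flipCoord i (flipCoord j x)) + f x = f (flipCoord i x) + f (flipCoord j x) := by
  have hi := affine_flipCoord_sub hf i x
  have hj := affine_flipCoord_sub hf j x
  have hij' := affine_flipCoord_sub hf i (flipCoord j x)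
  rw [flipCoord_apply_of_ne hij] at hij'
  linarith

end Affine

lemma eq_zero_or_eq_one_or_eq_neg_one_of_abs_eq {a b d : ℝ} (ha : a = 0 ∨ a = 1)
    (hb : b = 0 ∨ b = 1) (h : |b - a| = |d|) : d = 0 ∨ d = 1 ∨ d = -1 := by
  rcases ha with rfl | rfl <;> rcases hb with rfl | rfl <;> norm_num at h <;>
    first | exact Or.inl (abs_eq_zero.mp h.symm) | exact Or.inr (abs_eq zero_le_one |>.mp h.symm)

lemma add_ne_add_of_zero_one {a b c d : ℝ} (ha : a = 0 ∨ a = 1) (hb : b = 0 ∨ b = 1)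
    (hc : c = 0 ∨ c = 1) (hd : d = 0 ∨ d = 1) (hba : b ≠ a) (hca : c ≠ a) : d + a ≠ b + c := by
  rcases ha with rfl | rfl <;> rcases hb with rfl | rfl <;> rcases hc with rfl | rfl <;>
    rcases hd with rfl | rfl <;> norm_num at *

lemma eq_zero_one_or_eq_one_neg_one {c d : ℝ} (hc : c = 0 ∨ c = 1) (hcd : c + d = 0 ∨ c + d = 1)
    (hd : d ≠ 0) : (c = 0 ∧ d = 1) ∨ (c = 1 ∧ d = -1) := by
  rcases hc with rfl | rfl <;> rcases hcd with h | h
  all_goals first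
    | exact absurd (by linarith) hd
    | exact .inl ⟨rfl, by linarith⟩
    | exact .inr ⟨rfl, by linarith⟩

theorem stmt0 (n : ℕ) (c : ℝ) (cc : Fin n → ℝ)
    (f : (Fin n → Bool) → ℝ)
    (hf : ∀ x, f x = c + ∑ i, cc i * (if x i then (1:ℝ) else 0))
    (hPr : ((Finset.univ.filter fun x : Fin n → Bool => f x ≠ 0 ∧ f x ≠ 1).card : ℝ) / 2 ^ n
      < 1 / 4) :
    ((∀ x, f x = 0) ∨ (∀ x, f x = 1) ∨
      ∃ i, (∀ x, f x = if x i then (1:ℝ) else 0) ∨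
           (∀ x, f x = 1 - if x i then (1:ℝ) else 0)) ∧
    (∀ i, cc i = 0 ∨ cc i = 1 ∨ cc i = -1) ∧
    (∀ i j, cc i ≠ 0 → cc j ≠ 0 → i = j) := by
  set B := univ.filter fun x : Fin n → Bool => f x ≠ 0 ∧ f x ≠ 1
  have hgood : ∀ x ∉ B, f x = 0 ∨ f x = 1 := fun x hx => by
    by_contra! h
    exact hx (mem_filter.mpr ⟨mem_univ x, h⟩)
  have hB : 4 * #B < Fintype.card (Fin n → Bool) := by
    rw [div_lt_iff₀ (by positivity)] at hPr
    simp only [Fintype.card_pi, Fintype.card_bool, prod_const, card_univ, Fintype.card_fin]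
    exact_mod_cast (by linarith : (4 * #B : ℝ) < 2 ^ n)
  have hval : ∀ i, cc i = 0 ∨ cc i = 1 ∨ cc i = -1 := fun i => by
    obtain ⟨x, hx, hix, -⟩ := exists_flipCoord_square_notMem B hB i i
    exact eq_zero_or_eq_one_or_eq_neg_one_of_abs_eq (hgood x hx) (hgood _ hix)
      (abs_affine_flipCoord_sub hf i x)
  have hone : ∀ i j, cc i ≠ 0 → cc j ≠ 0 → i = j := fun i j hi hj => by
    by_contra hij
    obtain ⟨x, hx, hix, hjx, hijx⟩ := exists_flipCoord_square_notMem B hB i j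
    exact add_ne_add_of_zero_one (hgood x hx) (hgood _ hix) (hgood _ hjx) (hgood _ hijx)
      ((affine_flipCoord_ne_iff hf i x).mpr hi) ((affine_flipCoord_ne_iff hf j x).mpr hj)
      (affine_flipCoord_flipCoord hf hij x)
  refine ⟨?_, hval, hone⟩
  by_cases hconst : ∀ i, cc i = 0
  · obtain ⟨x, -, hx⟩ :=
      exists_mem_notMem_of_card_lt_card (s := B) (t := univ) (by rw [card_univ]; omega)
    have hfc : ∀ x, f x = c := fun x => by simp [hf, hconst]
    rcases hfc x ▸ hgood x hx with h | h
    · exact .inl fun y => (hfc y).trans h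
    · exact .inr (.inl fun y => (hfc y).trans h)
  obtain ⟨i, hi⟩ := not_forall.mp hconst
  have hfi := affine_eq_of_forall_ne hf fun j hj => by_contra fun h => hj (hone j i h hi)
  obtain ⟨x, hx, hix, -⟩ := exists_flipCoord_square_notMem B hB i i
  obtain ⟨y, hy, hyi⟩ := exists_apply_eq_of_flipCoord (p := (· ∉ B)) hx hix false
  obtain ⟨z, hz, hzi⟩ := exists_apply_eq_of_flipCoord (p := (· ∉ B)) hx hix true
  have hc : c = 0 ∨ c = 1 := by simpa [hfi, hyi] using hgood y hy
  have hci : c + cc i = 0 ∨ c + cc i = 1 := by simpa [hfi, hzi] using hgood z hz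
  right; right
  rcases eq_zero_one_or_eq_one_neg_one hc hci hi with ⟨h0, h1⟩ | ⟨h0, h1⟩
  · exact ⟨i, .inl fun x => by rw [hfi, h0, h1, zero_add, one_mul]⟩
  · exact ⟨i, .inr fun x => by rw [hfi, h0, h1, neg_one_mul, sub_eq_add_neg]⟩
end

section
/- Let f : {0,1}^n → ℝ be an affine function f(x) = c + Σ_i c_i x_i with real coefficients. If some c_i ∉ {0,±1}, then Pr[f(x) ∉ {0,1}] ≥ 1/2 over a uniformly random x ∈ {0,1}^n. -/
open scoped Classical

theorem stmt1 (n : ℕ) (c : ℝ) (cc : Fin n → ℝ)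
    (f : (Fin n → Bool) → ℝ)
    (hf : ∀ x, f x = c + ∑ i, cc i * (if x i then (1:ℝ) else 0))
    (hcoeff : ∃ i, cc i ≠ 0 ∧ cc i ≠ 1 ∧ cc i ≠ -1) :
    (1 : ℝ) / 2 ≤
      ((Finset.univ.filter fun x : Fin n → Bool => f x ≠ 0 ∧ f x ≠ 1).card : ℝ) / 2 ^ n := by
  obtain ⟨i, h0, h1, hm1⟩ := hcoeff
  set p : (Fin n → Bool) → Prop := fun x => f x ≠ 0 ∧ f x ≠ 1 with hp
  set Bad := Finset.univ.filter p with hBadDef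
  set Good := Finset.univ.filter (fun x => ¬ p x) with hGoodDef
  have hdiff : ∀ x : Fin n → Bool, f (Function.update x i (!x i)) =
      f x + (if x i then -cc i else cc i) := by
    intro x
    rw [hf, hf]
    have key : ∀ j : Fin n, cc j * (if Function.update x i (!x i) j then (1:ℝ) else 0)
        = cc j * (if x j then (1:ℝ) else 0)
          + (if j = i then (if x i then -cc i else cc i) else 0) := by
      intro j
      by_cases hj : j = i
      · subst hj
        simp only [Function.update_self, if_pos rfl]
        cases h : x j <;> simp
      · simp [Function.update_of_ne hj, hj]
    rw [Finset.sum_congr rfl fun j _ => key j, Finset.sum_add_distrib,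
      Finset.sum_ite_eq' Finset.univ i]
    simp; ring
  have hmaps : ∀ x ∈ Good, Function.update x i (!x i) ∈ Bad := by
    intro x hx
    simp only [hGoodDef, Finset.mem_filter, Finset.mem_univ, true_and] at hx
    simp only [hBadDef, Finset.mem_filter, Finset.mem_univ, true_and]
    by_contra hb
    have hfa : f x = 0 ∨ f x = 1 := by
      rcases not_and_or.mp hx with h | h
      · exact Or.inl (not_not.mp h)
      · exact Or.inr (not_not.mp h)
    have hfb : f (Function.update x i (!x i)) = 0 ∨ f (Function.update x i (!x i)) = 1 := by
      rcases not_and_or.mp hb with h | h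
      · exact Or.inl (not_not.mp h)
      · exact Or.inr (not_not.mp h)
    have hd := hdiff x
    rcases hfa with ha | ha <;> rcases hfb with hb2 | hb2 <;> rw [ha, hb2] at hd <;>
      cases h : x i <;> rw [h] at hd <;> simp at hd <;> first
          | (exact h0 (by linarith))
          | (exact h1 (by linarith))
          | (exact hm1 (by linarith))
  have hinj : Set.InjOn (fun x : Fin n → Bool => Function.update x i (!x i)) Good := by
    intro a _ b _ hab
    have : ∀ x : Fin n → Bool, Function.update (Function.update x i (!x i)) i
        (!(Function.update x i (!x i)) i) = x := by
      intro x
      funext j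
      by_cases hj : j = i
      · subst hj; simp
      · simp [Function.update_of_ne hj]
    calc a = _ := (this a).symm
      _ = _ := by rw [show Function.update a i (!a i) = Function.update b i (!b i) from hab]
      _ = b := this b
  have hcard : Good.card ≤ Bad.card :=
    Finset.card_le_card_of_injOn _ hmaps hinj
  have htotal : Bad.card + Good.card = 2 ^ n := by
    rw [hBadDef, hGoodDef, Finset.card_filter_add_card_filter_not]
    simp [Finset.card_univ]
  have h2 : (2:ℝ) ^ n ≤ 2 * Bad.card := by
    have : (Bad.card : ℝ) + Good.card = 2 ^ n := by
      exact_mod_cast congrArg (Nat.cast : ℕ → ℝ) htotal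
    have : (Good.card : ℝ) ≤ Bad.card := by exact_mod_cast hcard
    push_cast at *
    linarith
  rw [div_le_div_iff₀ (by norm_num) (by positivity)]
  linarith
end

section
/- Let f : {0,1}^n → ℝ be an affine function f(x) = c + Σ_i c_i x_i. If two coefficients c_i and c_j (with i ≠ j) are both nonzero, then Pr[f(x) ∉ {0,1}] ≥ 1/4 over a uniformly random x ∈ {0,1}^n. -/
/-!
Fix `x` and move only the coordinates `i` and `j`: on the resulting square `f` takes the values
`a, a + cᵢ, a + cⱼ, a + cᵢ + cⱼ`. If all four lay in `{0, 1}`, then `cᵢ = cⱼ = 1 - 2a = ±1` and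
`a + cᵢ + cⱼ ∈ {2, -1}`, so every such square contains a point where `f ∉ {0, 1}`. The squares
partition the cube into blocks of four, hence at least a quarter of the cube is such a point.
-/

open Finset Function

lemma exists_bool_add_mul_not_mem_zero_one {a p q : ℝ} (hp : p ≠ 0) (hq : q ≠ 0) :
    ∃ s t : Bool,
      a + p * (if s then 1 else 0) + q * (if t then 1 else 0) ∉ ({0, 1} : Set ℝ) := by
  by_contra! h
  have h00 := h false false
  have h10 := h true false
  have h01 := h false true
  have h11 := h true true
  simp only [Set.mem_insert_iff, Set.mem_singleton_iff, Bool.false_eq_true, if_true,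
    if_false] at h00 h10 h01 h11
  rcases h00 with h00 | h00 <;> rcases h10 with h10 | h10 <;> rcases h01 with h01 | h01 <;>
    rcases h11 with h11 | h11 <;>
    first
      | exact hp (by linarith)
      | exact hq (by linarith)

lemma card_le_mul_card_of_forall_exists_mem_fiber {α β : Type*} [Fintype α] [DecidableEq β]
    (g : α → β) (s : Finset α) (k : ℕ) (hfib : ∀ b, #{x | g x = b} ≤ k)
    (hs : ∀ x, ∃ y ∈ s, g y = g x) : Fintype.card α ≤ k * #s :=
  calc Fintype.card α ≤ k * #(univ.image g) := card_le_mul_card_image univ k fun b _ => hfib b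
    _ ≤ k * #(s.image g) := by
        refine Nat.mul_le_mul_left k (card_le_card fun b hb => ?_)
        obtain ⟨x, -, rfl⟩ := mem_image.mp hb
        obtain ⟨y, hy, hyx⟩ := hs x
        exact mem_image.mpr ⟨y, hy, hyx⟩
    _ ≤ k * #s := by gcongr; exact card_image_le

section Cube

variable {ι : Type*} [DecidableEq ι]

lemma affine_update [Fintype ι] {c : ℝ} {cc : ι → ℝ} {f : (ι → Bool) → ℝ}
    (hf : ∀ x, f x = c + ∑ i, cc i * (if x i then (1 : ℝ) else 0))
    (x : ι → Bool) (k : ι) (b : Bool) :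
    f (update x k b) = f x + cc k * ((if b then 1 else 0) - (if x k then 1 else 0)) := by
  have hdiff : ∑ m, cc m * (if update x k b m then (1 : ℝ) else 0)
      - ∑ m, cc m * (if x m then (1 : ℝ) else 0)
      = cc k * ((if b then 1 else 0) - (if x k then 1 else 0)) := by
    rw [← sum_sub_distrib, sum_eq_single k]
    · simp only [update_self]; ring
    · intro m _ hm
      simp [update_of_ne hm]
    · simp
  rw [hf, hf]
  linarith

def clearPair (i j : ι) (x : ι → Bool) : ι → Bool :=
  update (update x i false) j false

lemma clearPair_apply_left {i j : ι} (hij : i ≠ j) (x : ι → Bool) : clearPair i j x i = false := by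
  simp [clearPair, update_of_ne hij]

lemma clearPair_apply_right (i j : ι) (x : ι → Bool) : clearPair i j x j = false := by
  simp [clearPair]

lemma clearPair_update_update (i j : ι) (x : ι → Bool) (s t : Bool) :
    clearPair i j (update (update x i s) j t) = clearPair i j x := by
  funext k
  simp only [clearPair, update_apply]
  split_ifs <;> rfl

lemma eq_of_clearPair_eq {i j : ι} {x y : ι → Bool} (h : clearPair i j x = clearPair i j y)
    (hi : x i = y i) (hj : x j = y j) : x = y := by
  funext k
  have hk := congrFun h k
  by_cases hki : k = i
  · rwa [hki]
  by_cases hkj : k = j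
  · rwa [hkj]
  simpa [clearPair, update_of_ne hki, update_of_ne hkj] using hk

lemma card_clearPair_fiber_le [Fintype ι] (i j : ι) (y : ι → Bool) :
    #{x | clearPair i j x = y} ≤ 4 :=
  calc #{x | clearPair i j x = y} ≤ #(univ : Finset (Bool × Bool)) := by
        refine card_le_card_of_injOn (fun x => (x i, x j)) (fun _ _ => mem_univ _) ?_
        intro x hx x' hx' hxx'
        simp only [coe_filter, mem_univ, true_and, Set.mem_ofPred_eq] at hx hx'
        exact eq_of_clearPair_eq (hx.trans hx'.symm) (congrArg Prod.fst hxx')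
          (congrArg Prod.snd hxx')
    _ = 4 := rfl

lemma affine_update_update [Fintype ι] {c : ℝ} {cc : ι → ℝ} {f : (ι → Bool) → ℝ}
    (hf : ∀ x, f x = c + ∑ i, cc i * (if x i then (1 : ℝ) else 0))
    {i j : ι} (hij : i ≠ j) {y : ι → Bool} (hyi : y i = false) (hyj : y j = false) (s t : Bool) :
    f (update (update y i s) j t)
      = f y + cc i * (if s then 1 else 0) + cc j * (if t then 1 else 0) := by
  rw [affine_update hf, affine_update hf, update_of_ne hij.symm, hyi, hyj]
  simp

lemma exists_mem_fiber_clearPair_not_mem_zero_one [Fintype ι] {c : ℝ} {cc : ι → ℝ}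
    {f : (ι → Bool) → ℝ} (hf : ∀ x, f x = c + ∑ i, cc i * (if x i then (1 : ℝ) else 0))
    {i j : ι} (hij : i ≠ j) (hi : cc i ≠ 0) (hj : cc j ≠ 0) (x : ι → Bool) :
    ∃ y, f y ≠ 0 ∧ f y ≠ 1 ∧ clearPair i j y = clearPair i j x := by
  obtain ⟨s, t, hst⟩ := exists_bool_add_mul_not_mem_zero_one (a := f (clearPair i j x)) hi hj
  rw [← affine_update_update hf hij (clearPair_apply_left hij x) (clearPair_apply_right i j x)]
    at hst
  simp only [Set.mem_insert_iff, Set.mem_singleton_iff, not_or] at hst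
  refine ⟨_, hst.1, hst.2, ?_⟩
  rw [clearPair_update_update]
  exact clearPair_update_update i j x false false

end Cube

theorem stmt2 (n : ℕ) (c : ℝ) (cc : Fin n → ℝ)
    (f : (Fin n → Bool) → ℝ)
    (hf : ∀ x, f x = c + ∑ i, cc i * (if x i then (1:ℝ) else 0))
    (i j : Fin n) (hij : i ≠ j) (hi : cc i ≠ 0) (hj : cc j ≠ 0) :
    (1 : ℝ) / 4 ≤
      ((Finset.univ.filter fun x : Fin n → Bool => f x ≠ 0 ∧ f x ≠ 1).card : ℝ) / 2 ^ n := by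
  set bad := univ.filter fun x : Fin n → Bool => f x ≠ 0 ∧ f x ≠ 1
  have hcount : 2 ^ n ≤ 4 * #bad := by
    have hcard := card_le_mul_card_of_forall_exists_mem_fiber (clearPair i j) bad 4
      (card_clearPair_fiber_le i j) fun x => by
        obtain ⟨y, hy0, hy1, hy⟩ := exists_mem_fiber_clearPair_not_mem_zero_one hf hij hi hj x
        exact ⟨y, mem_filter.mpr ⟨mem_univ y, hy0, hy1⟩, hy⟩
    simpa using hcard
  have hcast : (2 : ℝ) ^ n ≤ 4 * #bad := by exact_mod_cast hcount
  rw [le_div_iff₀ (by positivity)]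
  linarith
end

section
/- Let f : {0,1}^n → ℝ be an affine function f(x) = c + Σ_i c_i x_i, and suppose dist(f(x), {0,1}) ≤ ε for all x ∈ {0,1}^n, where ε < 1/4. Then the function g(x) = round(f(x), {0,1}) (the nearest point of {0,1} to f(x)) depends on at most one coordinate: g ∈ {0, 1, x_1,…,x_n, 1−x_1,…,1−x_n}. -/
/-!
Two points have the same rounded value iff their `f`-values are within `2ε`, because
`2ε < 1 - 2ε`. Flipping coordinate `i` moves `f` by `±cᵢ`, so a coordinate with `|cᵢ| ≤ 2ε`
never changes `g`, while one with `|cᵢ| > 2ε` always does. Two such coordinates `i ≠ j` are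
impossible: on the square they span, `g` would alternate, which forces both `|cᵢ + cⱼ|` and
`|cᵢ - cⱼ|` to be at most `2ε`, hence `|cᵢ| ≤ 2ε`.
-/

open Function Finset

theorem Finset.apply_piecewise_eq_of_forall_update {ι β : Type*} [DecidableEq ι]
    {α : ι → Type*} {g : (∀ i, α i) → β} {s : Finset ι}
    (hg : ∀ x, ∀ j ∈ s, ∀ b, g (update x j b) = g x) (x y : ∀ i, α i) :
    g (s.piecewise y x) = g x := by
  induction s using Finset.induction_on with
  | empty => rw [piecewise_empty]
  | insert a s _ ih =>
    rw [piecewise_insert, hg _ a (mem_insert_self a s),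
      ih fun z j hj b => hg z j (mem_insert_of_mem hj) b]

theorem eq_iff_abs_sub_le_two_mul {a b u v ε : ℝ} (ha : a = 0 ∨ a = 1) (hb : b = 0 ∨ b = 1)
    (hε : ε < 1 / 4) (hu : |u - a| ≤ ε) (hv : |v - b| ≤ ε) : a = b ↔ |u - v| ≤ 2 * ε := by
  rw [abs_le] at hu hv ⊢
  rcases ha with rfl | rfl <;> rcases hb with rfl | rfl <;> norm_num <;>
    first | (constructor <;> linarith) | (intro h; linarith)

theorem eq_of_ne_of_ne_of_zero_or_one {a b c : ℝ} (ha : a = 0 ∨ a = 1) (hb : b = 0 ∨ b = 1)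
    (hc : c = 0 ∨ c = 1) (hab : a ≠ b) (hbc : b ≠ c) : a = c := by
  rcases ha with rfl | rfl <;> rcases hb with rfl | rfl <;> rcases hc with rfl | rfl <;>
    simp_all

theorem eq_ite_or_eq_one_sub_ite {φ : Bool → ℝ} (h01 : ∀ b, φ b = 0 ∨ φ b = 1)
    (hne : φ true ≠ φ false) :
    (∀ b, φ b = if b then 1 else 0) ∨ ∀ b, φ b = 1 - if b then 1 else 0 := by
  rcases h01 true with h1 | h1 <;> rcases h01 false with h0 | h0
  · exact absurd (h1.trans h0.symm) hne
  · exact Or.inr fun b => by cases b <;> simp [h0, h1]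
  · exact Or.inl fun b => by cases b <;> simp [h0, h1]
  · exact absurd (h1.trans h0.symm) hne

section AffineRounding

variable {ι : Type*} [Fintype ι] [DecidableEq ι] {c ε : ℝ} {cc : ι → ℝ}
  {f g : (ι → Bool) → ℝ}

theorem affine_update_sub (hf : ∀ x, f x = c + ∑ i, cc i * if x i then (1 : ℝ) else 0)
    (x : ι → Bool) (a : ι) (b : Bool) :
    f (update x a b) - f x = cc a * ((if b then 1 else 0) - if x a then 1 else 0) := by
  rw [hf, hf, add_sub_add_left_eq_sub, ← sum_sub_distrib, sum_eq_single a]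
  · rw [update_self, mul_sub]
  · intro i _ hi
    rw [update_of_ne hi, sub_self]
  · exact fun h => absurd (mem_univ a) h

theorem abs_affine_update_sub_le (hf : ∀ x, f x = c + ∑ i, cc i * if x i then (1 : ℝ) else 0)
    (x : ι → Bool) (a : ι) (b : Bool) : |f (update x a b) - f x| ≤ |cc a| := by
  rw [affine_update_sub hf, abs_mul]
  refine mul_le_of_le_one_right (abs_nonneg _) ?_
  cases b <;> cases x a <;> simp

theorem affine_update_true_sub_false
    (hf : ∀ x, f x = c + ∑ i, cc i * if x i then (1 : ℝ) else 0) (x : ι → Bool) (a : ι) :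
    f (update x a true) - f (update x a false) = cc a := by
  simpa using affine_update_sub hf (update x a false) a true

theorem round_update_eq_of_abs_le (hround : ∀ x y, g x = g y ↔ |f x - f y| ≤ 2 * ε)
    (hf : ∀ x, f x = c + ∑ i, cc i * if x i then (1 : ℝ) else 0) {a : ι}
    (ha : |cc a| ≤ 2 * ε) (x : ι → Bool) (b : Bool) : g (update x a b) = g x :=
  (hround _ _).2 ((abs_affine_update_sub_le hf x a b).trans ha)

theorem round_update_true_ne_false (hround : ∀ x y, g x = g y ↔ |f x - f y| ≤ 2 * ε)
    (hf : ∀ x, f x = c + ∑ i, cc i * if x i then (1 : ℝ) else 0) {a : ι}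
    (ha : 2 * ε < |cc a|) (x : ι → Bool) : g (update x a true) ≠ g (update x a false) := by
  rw [Ne, hround, affine_update_true_sub_false hf, not_le]
  exact ha

theorem eq_of_two_mul_lt_abs_of_two_mul_lt_abs
    (hround : ∀ x y, g x = g y ↔ |f x - f y| ≤ 2 * ε) (hg01 : ∀ x, g x = 0 ∨ g x = 1)
    (hf : ∀ x, f x = c + ∑ i, cc i * if x i then (1 : ℝ) else 0) {i j : ι}
    (hi : 2 * ε < |cc i|) (hj : 2 * ε < |cc j|) : i = j := by
  by_contra hij
  set p : Bool → Bool → ι → Bool := fun bi bj => update (update (fun _ => false) i bi) j bj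
  have hpi : ∀ bj, f (p true bj) - f (p false bj) = cc i := fun bj => by
    simp only [p, update_comm hij]
    exact affine_update_true_sub_false hf _ i
  have hpj : ∀ bi, f (p bi true) - f (p bi false) = cc j := fun bi =>
    affine_update_true_sub_false hf _ j
  have hflip_i : ∀ bj, g (p true bj) ≠ g (p false bj) := fun bj => by
    simp only [p, update_comm hij]
    exact round_update_true_ne_false hround hf hi _
  have hflip_j : ∀ bi, g (p bi true) ≠ g (p bi false) := fun bi =>
    round_update_true_ne_false hround hf hj _
  have hdiag : |cc i + cc j| ≤ 2 * ε := by
    have h := (hround _ _).1 (eq_of_ne_of_ne_of_zero_or_one (hg01 _) (hg01 _) (hg01 _)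
      (hflip_j true) (hflip_i false))
    rwa [show f (p true true) - f (p false false) = cc i + cc j by
      linarith [hpi false, hpj true]] at h
  have hanti : |cc i - cc j| ≤ 2 * ε := by
    have h := (hround _ _).1 (eq_of_ne_of_ne_of_zero_or_one (hg01 _) (hg01 _) (hg01 _)
      (hflip_i false) (hflip_j false).symm)
    rwa [show f (p true false) - f (p false true) = cc i - cc j by
      linarith [hpi false, hpj false]] at h
  rw [abs_le] at hdiag hanti
  exact hi.not_ge (abs_le.2 ⟨by linarith, by linarith⟩)

theorem round_eq_of_eq_on_large (hround : ∀ x y, g x = g y ↔ |f x - f y| ≤ 2 * ε)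
    (hf : ∀ x, f x = c + ∑ i, cc i * if x i then (1 : ℝ) else 0) (x y : ι → Bool)
    (hxy : ∀ j, 2 * ε < |cc j| → x j = y j) : g x = g y := by
  set s := univ.filter fun j => |cc j| ≤ 2 * ε
  have hy : s.piecewise y x = y := by
    ext j
    by_cases hj : j ∈ s
    · exact piecewise_eq_of_mem _ _ _ hj
    · rw [piecewise_eq_of_notMem _ _ _ hj]
      exact hxy j (not_le.1 fun h => hj (mem_filter.2 ⟨mem_univ j, h⟩))
  rw [← hy]
  exact (apply_piecewise_eq_of_forall_update (fun z j hj b =>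
    round_update_eq_of_abs_le hround hf (mem_filter.1 hj).2 z b) x y).symm

end AffineRounding

theorem stmt3 (n : ℕ) (c : ℝ) (cc : Fin n → ℝ)
    (f : (Fin n → Bool) → ℝ)
    (hf : ∀ x, f x = c + ∑ i, cc i * (if x i then (1:ℝ) else 0))
    (ε : ℝ) (hε : ε < 1 / 4)
    (hdist : ∀ x, min |f x| |f x - 1| ≤ ε)
    (g : (Fin n → Bool) → ℝ)
    (hg : ∀ x, (g x = 0 ∨ g x = 1) ∧ |f x - g x| = min |f x| |f x - 1|) :
    (∀ x, g x = 0) ∨ (∀ x, g x = 1) ∨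
      ∃ i, (∀ x, g x = if x i then (1:ℝ) else 0) ∨
           (∀ x, g x = 1 - if x i then (1:ℝ) else 0) := by
  have hround : ∀ x y, g x = g y ↔ |f x - f y| ≤ 2 * ε := fun x y =>
    eq_iff_abs_sub_le_two_mul (hg x).1 (hg y).1 hε ((hg x).2 ▸ hdist x) ((hg y).2 ▸ hdist y)
  by_cases hlarge : ∃ i, 2 * ε < |cc i|
  · obtain ⟨i, hi⟩ := hlarge
    have hgi : ∀ x, g x = g (update (fun _ => false) i (x i)) := fun x =>
      round_eq_of_eq_on_large hround hf _ _ fun j hj => by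
        rw [eq_of_two_mul_lt_abs_of_two_mul_lt_abs hround (fun x => (hg x).1) hf hj hi,
          update_self]
    refine Or.inr (Or.inr ⟨i, ?_⟩)
    rcases eq_ite_or_eq_one_sub_ite (fun b => (hg _).1)
      (round_update_true_ne_false hround hf hi (fun _ => false)) with h | h
    · exact Or.inl fun x => (hgi x).trans (h (x i))
    · exact Or.inr fun x => (hgi x).trans (h (x i))
  · push Not at hlarge
    have hconst : ∀ x, g x = g (fun _ => false) := fun x =>
      round_eq_of_eq_on_large hround hf _ _ fun j hj => absurd hj (hlarge j).not_gt
    rcases (hg fun _ => false).1 with h | h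
    · exact Or.inl fun x => (hconst x).trans h
    · exact Or.inr (Or.inl fun x => (hconst x).trans h)
end

section
/- Let δ : [n]×[n] → ℝ satisfy (1/n) Σ_{i,j} δ_{i,j}² ≤ ε, and let F : S_n → ℝ be given by F(π) = Σ_{i=1}^n (δ_{i,π(i)} − (1/n)Σ_j δ_{i,j}). Then E_{π}[F(π)²] ≤ 4(n−1)/n · Σ_{i,j} δ_{i,j}²/n ≤ 4ε, i.e., E[(Σ_{i,j} δ_{i,j}(x_{i,j} − 1/n))²] = O(ε). -/
/-!
Write `a i j = δ i j - (1/n) ∑ₗ δ i l`, so that `F π = ∑ᵢ a i (π i)` and every row of `a` sums to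
zero. Expanding `F π ^ 2` and summing over `π`, the diagonal terms give `(n-1)! ∑ᵢⱼ a i j ^ 2`.
For `i ≠ k`, right multiplication by a transposition fixing `i` shows that
`∑_π a i (π i) * a k (π k)` is the same for every `k ≠ i`; as `∑ₘ a k (π m) = 0`, it equals
`-(n-2)! ∑ⱼ a i j * a k j`. Hence `(n-1) ∑_π F π ^ 2 = n! ∑ᵢⱼ a i j ^ 2 - (n-1)! ∑ⱼ (∑ᵢ a i j) ^ 2`,
so `E[F²] ≤ ∑ a² / (n-1) ≤ ∑ δ² / (n-1)`, and `1/(n-1) ≤ 4(n-1)/n²` once `n ≥ 2`.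
-/

open Finset Equiv Fintype
open scoped Nat

section SubMean

variable {β R : Type*} [Fintype β] [Field R]

def subMean (x : β → R) (j : β) : R := x j - 1 / (card β : R) * ∑ j', x j'

variable [CharZero R]

theorem card_mul_mean (x : β → R) : (card β : R) * (1 / card β * ∑ j, x j) = ∑ j, x j := by
  rcases isEmpty_or_nonempty β with hβ | hβ
  · simp
  · field_simp

theorem sum_subMean (x : β → R) : ∑ j, subMean x j = 0 := by
  simp only [subMean, sum_sub_distrib, sum_const, Finset.card_univ, nsmul_eq_mul, card_mul_mean,
    sub_self]

theorem sum_sq_subMean_le [LinearOrder R] [IsStrictOrderedRing R] (x : β → R) :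
    ∑ j, subMean x j ^ 2 ≤ ∑ j, x j ^ 2 := by
  set m := 1 / (card β : R) * ∑ j, x j
  have h_expand : ∑ j, subMean x j ^ 2 = ∑ j, x j ^ 2 - card β * m ^ 2 := by
    simp only [subMean, sub_sq, sum_add_distrib, sum_sub_distrib, sum_const, Finset.card_univ,
      nsmul_eq_mul, ← sum_mul, ← mul_sum]
    linear_combination 2 * m * card_mul_mean x
  rw [h_expand, sub_le_self_iff]
  positivity

end SubMean

namespace Equiv.Perm

variable {α R : Type*} [Fintype α] [DecidableEq α]

section CommRing

variable [CommRing R] [IsDomain R] [CharZero R]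

theorem sum_comp_apply (g : α → R) (i : α) :
    ∑ π : Perm α, g (π i) = (card α - 1)! * ∑ j, g j := by
  have h_indep (k : α) : ∑ π : Perm α, g (π k) = ∑ π : Perm α, g (π i) := by
    simpa using Equiv.sum_comp (Equiv.mulRight (swap i k)) fun π => g (π i)
  have hN : 0 < card α := card_pos_iff.2 ⟨i⟩
  refine mul_left_cancel₀ (Nat.cast_ne_zero.2 hN.ne' : (card α : R) ≠ 0) ?_
  calc (card α : R) * ∑ π : Perm α, g (π i) = ∑ k, ∑ π : Perm α, g (π k) := by
        simp [h_indep]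
    _ = ∑ π : Perm α, ∑ j, g (π j) := sum_comm
    _ = ∑ π : Perm α, ∑ j, g j := by simp only [Equiv.sum_comp]
    _ = card α * ((card α - 1)! * ∑ j, g j) := by
        rw [sum_const, Finset.card_univ, Fintype.card_perm, nsmul_eq_mul,
          ← Nat.mul_factorial_pred hN.ne']
        push_cast
        ring

theorem sum_comp_apply_comp_apply_of_ne (h : α → α → R) {i k : α} (hik : i ≠ k) :
    ((card α - 1 : ℕ) : R) * ∑ π : Perm α, h (π i) (π k) + (card α - 1)! * ∑ j, h j j
      = (card α - 1)! * ∑ j, ∑ l, h j l := by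
  have h_indep : ∀ m ∈ univ.erase i,
      ∑ π : Perm α, h (π i) (π m) = ∑ π : Perm α, h (π i) (π k) := by
    intro m hm
    simpa [swap_apply_of_ne_of_ne hik (ne_of_mem_erase hm).symm] using
      Equiv.sum_comp (Equiv.mulRight (swap k m)) fun π => h (π i) (π k)
  calc ((card α - 1 : ℕ) : R) * ∑ π : Perm α, h (π i) (π k) + (card α - 1)! * ∑ j, h j j
      = ∑ m ∈ univ.erase i, ∑ π : Perm α, h (π i) (π m) + ∑ π : Perm α, h (π i) (π i) := by
        rw [sum_congr rfl h_indep, sum_const, card_erase_of_mem (mem_univ i), Finset.card_univ,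
          nsmul_eq_mul, sum_comp_apply fun j => h j j]
    _ = ∑ π : Perm α, ∑ m, h (π i) (π m) := by rw [sum_erase_add _ _ (mem_univ i), sum_comm]
    _ = ∑ π : Perm α, ∑ l, h (π i) l := by simp only [Equiv.sum_comp]
    _ = (card α - 1)! * ∑ j, ∑ l, h j l := sum_comp_apply (fun j => ∑ l, h j l) i

theorem card_sub_one_mul_sum_sq_sum_apply (a : α → α → R) (ha : ∀ i, ∑ j, a i j = 0) :
    ((card α - 1 : ℕ) : R) * ∑ π : Perm α, (∑ i, a i (π i)) ^ 2
      = (card α)! * ∑ i, ∑ j, a i j ^ 2 - (card α - 1)! * ∑ j, (∑ i, a i j) ^ 2 := by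
  have h_pair (i k : α) : ((card α - 1 : ℕ) : R) * ∑ π : Perm α, a i (π i) * a k (π k)
      = ((if i = k then ((card α)! : R) else 0) - (card α - 1)!) * ∑ j, a i j * a k j := by
    rcases eq_or_ne i k with rfl | hik
    · have hN : card α ≠ 0 := (card_pos_iff.2 ⟨i⟩).ne'
      rw [sum_comp_apply (fun j => a i j * a i j), if_pos rfl, ← Nat.mul_factorial_pred hN]
      push_cast [Nat.cast_sub (Nat.one_le_iff_ne_zero.2 hN)]
      ring
    · have := sum_comp_apply_comp_apply_of_ne (fun j l => a i j * a k l) hik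
      simp only [← mul_sum, ha, mul_zero, sum_const_zero] at this
      rw [if_neg hik]
      linear_combination this
  calc ((card α - 1 : ℕ) : R) * ∑ π : Perm α, (∑ i, a i (π i)) ^ 2
      = ∑ i, ∑ k, ((card α - 1 : ℕ) : R) * ∑ π : Perm α, a i (π i) * a k (π k) := by
        simp_rw [sq, Fintype.sum_mul_sum, mul_sum]
        exact sum_comm.trans (sum_congr rfl fun i _ => sum_comm)
    _ = _ := by
        simp_rw [h_pair, sub_mul, sum_sub_distrib, ite_mul, zero_mul, Fintype.sum_ite_eq, ← mul_sum]
        congr 2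
        · simp_rw [sq]
        · simp_rw [sq, Fintype.sum_mul_sum]
          exact (Fintype.sum_congr _ _ fun i => sum_comm).trans sum_comm

end CommRing

theorem card_sub_one_mul_sum_sq_sum_subMean_le [Field R] [LinearOrder R] [IsStrictOrderedRing R]
    (δ : α → α → R) :
    ((card α - 1 : ℕ) : R) * ∑ π : Perm α, (∑ i, subMean (δ i) (π i)) ^ 2
      ≤ (card α)! * ∑ i, ∑ j, δ i j ^ 2 := by
  rw [card_sub_one_mul_sum_sq_sum_apply _ fun i => sum_subMean (δ i)]
  calc (card α)! * ∑ i, ∑ j, subMean (δ i) j ^ 2 - (card α - 1)! * ∑ j, (∑ i, subMean (δ i) j) ^ 2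
      ≤ (card α)! * ∑ i, ∑ j, subMean (δ i) j ^ 2 := sub_le_self _ (by positivity)
    _ ≤ (card α)! * ∑ i, ∑ j, δ i j ^ 2 :=
        mul_le_mul_of_nonneg_left (sum_le_sum fun i _ => sum_sq_subMean_le (δ i)) (by positivity)

end Equiv.Perm

theorem div_sub_one_le_four_mul_div {R : Type*} [Field R] [LinearOrder R] [IsStrictOrderedRing R]
    {x S : R} (hx : 2 ≤ x) (hS : 0 ≤ S) : S / (x - 1) ≤ 4 * (x - 1) / x * (S / x) := by
  rw [div_mul_div_comm, div_le_div_iff₀ (by linarith) (by positivity)]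
  nlinarith [mul_nonneg hS (mul_nonneg (by linarith : (0 : R) ≤ x - 2)
    (by linarith : (0 : R) ≤ 3 * x - 2))]

theorem stmt5 (n : ℕ) (δ : Fin n → Fin n → ℝ) (ε : ℝ)
    (hδ : (1 / (n : ℝ)) * ∑ i, ∑ j, δ i j ^ 2 ≤ ε)
    (F : Equiv.Perm (Fin n) → ℝ)
    (hF : ∀ π, F π = ∑ i, (δ i (π i) - (1 / (n : ℝ)) * ∑ j, δ i j)) :
    (∑ π : Equiv.Perm (Fin n), F π ^ 2) / (n.factorial : ℝ)
        ≤ 4 * ((n : ℝ) - 1) / n * ((∑ i, ∑ j, δ i j ^ 2) / n) ∧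
    4 * ((n : ℝ) - 1) / n * ((∑ i, ∑ j, δ i j ^ 2) / n) ≤ 4 * ε := by
  have hS : 0 ≤ ∑ i, ∑ j, δ i j ^ 2 := by positivity
  have hF_subMean (π : Perm (Fin n)) : F π = ∑ i, subMean (δ i) (π i) := by
    simp [hF, subMean]
  refine ⟨?_, ?_⟩
  · rcases lt_or_ge n 2 with hn | hn
    · interval_cases n <;> simp [hF]
    have h_var := Perm.card_sub_one_mul_sum_sq_sum_subMean_le δ
    simp only [← hF_subMean, Fintype.card_fin, Nat.cast_sub (by omega : 1 ≤ n),
      Nat.cast_one] at h_var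
    have hn' : (2 : ℝ) ≤ n := by exact_mod_cast hn
    calc (∑ π, F π ^ 2) / n ! ≤ (∑ i, ∑ j, δ i j ^ 2) / (n - 1) := by
          rw [div_le_div_iff₀ (by positivity) (by linarith)]
          linarith
      _ ≤ 4 * ((n : ℝ) - 1) / n * ((∑ i, ∑ j, δ i j ^ 2) / n) := div_sub_one_le_four_mul_div hn' hS
  · rcases Nat.eq_zero_or_pos n with rfl | hn
    · simpa using hδ
    have hn' : (1 : ℝ) ≤ n := by exact_mod_cast hn
    calc 4 * ((n : ℝ) - 1) / n * ((∑ i, ∑ j, δ i j ^ 2) / n)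
        ≤ 4 * ((∑ i, ∑ j, δ i j ^ 2) / n) := by
          gcongr ?_ * _
          rw [div_le_iff₀ (by positivity)]
          linarith
      _ ≤ 4 * ε := by
          rw [one_div_mul_eq_div] at hδ
          linarith
end

section
/- Let R ⊆ [n]² with |R| ≤ Cn, and suppose that a uniformly random permutation π ∈ S_n avoids R (i.e., (i, π(i)) ∉ R for all i ∈ [n]) with probability at least γ > 0. If n ≥ 8C/γ + 2, then for all i, j ∈ [n], the conditional probability that π avoids R \ {(i,j)} given π(i) = j is at least γ/2. -/
/-!
Let `A` be the permutations avoiding `R`, and `G` those with `π i = j` avoiding `R \ {(i, j)}`.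
For `π ∈ A`, the permutation `π * swap i (π⁻¹ j)` sends `i` to `j` and agrees with `π` off
`{i, π⁻¹ j}`, so it lies in `G` unless `(π⁻¹ j, π i) ∈ R \ {(i, j)}`. As `π` is recovered from
this image together with `π⁻¹ j`, the permutations of the first kind number at most `n |G|`;
those of the second kind number at most `|R| (n - 2)!`, since for each pair `(a, b)` at most
`(n - 2)!` permutations satisfy `π a = j`, `π i = b`. Hence `γ n! ≤ |A| ≤ n |G| + C n (n - 2)!`,
and `8 C ≤ γ (n - 2)` turns this into `|G| ≥ γ (n - 1)! / 2`.
-/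

open Finset Equiv Nat

namespace Equiv.Perm

variable {α : Type*}

abbrev Avoids (R : Finset (α × α)) (π : Perm α) : Prop := ∀ k, (k, π k) ∉ R

theorem Avoids.mul_swap [DecidableEq α] {R : Finset (α × α)} {π : Perm α} (hπ : Avoids R π)
    {i j : α} (h : (π⁻¹ j, π i) ∉ R.erase (i, j)) :
    Avoids (R.erase (i, j)) (π * swap i (π⁻¹ j)) := by
  intro k
  rcases eq_or_ne k i with rfl | hki
  · simp
  rcases eq_or_ne k (π⁻¹ j) with rfl | hkj
  · simpa using h
  rw [mul_apply, swap_apply_of_ne_of_ne hki hkj]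
  exact fun hk => hπ k (mem_of_mem_erase hk)

variable [Fintype α] [DecidableEq α]

theorem card_fixing_pointwise (s : Finset α) :
    #{σ : Perm α | ∀ x ∈ s, σ x = x} = (Fintype.card α - #s)! := by
  rw [← Fintype.card_subtype, ← Fintype.card_coe s, ← Fintype.card_subtype_compl,
    ← Fintype.card_perm]
  refine (Fintype.card_congr ((Perm.subtypeEquivSubtypePerm _).trans
    (Equiv.subtypeEquivRight fun σ => ?_))).symm
  simp

theorem card_agreeing_on (π₀ : Perm α) (s : Finset α) :
    #{π : Perm α | ∀ x ∈ s, π x = π₀ x} = (Fintype.card α - #s)! := by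
  rw [← card_fixing_pointwise s]
  refine card_equiv (Equiv.mulLeft π₀⁻¹) fun π => ?_
  simp [Equiv.eq_symm_apply, eq_comm]

theorem card_apply_eq_and_apply_eq_le {a b i j : α} (h : (a, b) ≠ (i, j)) :
    #{π : Perm α | π a = j ∧ π i = b} ≤ (Fintype.card α - 2)! := by
  by_cases hex : ∃ π₀ : Perm α, π₀ a = j ∧ π₀ i = b
  · obtain ⟨π₀, ha, hi⟩ := hex
    have hai : a ≠ i := by
      rintro rfl
      exact h (by rw [← ha, ← hi])
    refine le_of_eq ?_
    calc #{π : Perm α | π a = j ∧ π i = b}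
        = #{π : Perm α | ∀ x ∈ ({a, i} : Finset α), π x = π₀ x} := by simp [ha, hi]
      _ = (Fintype.card α - 2)! := by rw [card_agreeing_on, card_pair hai]
  · push Not at hex
    simp [filter_false_of_mem fun π _ => not_and.2 (hex π)]

theorem card_inv_apply_apply_mem_le {S : Finset (α × α)} {i j : α} (hS : (i, j) ∉ S) :
    #{π : Perm α | (π⁻¹ j, π i) ∈ S} ≤ #S * (Fintype.card α - 2)! := by
  calc #{π : Perm α | (π⁻¹ j, π i) ∈ S}
      ≤ #(S.biUnion fun ab => {π : Perm α | π ab.1 = j ∧ π i = ab.2}) := by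
        refine card_le_card fun π hπ => mem_biUnion.2 ⟨_, (mem_filter.1 hπ).2, ?_⟩
        simp
    _ ≤ #S * (Fintype.card α - 2)! :=
        card_biUnion_le_card_mul _ _ _ fun ab hab =>
          card_apply_eq_and_apply_eq_le (ne_of_mem_of_not_mem hab hS)

theorem card_avoids_le (R : Finset (α × α)) (i j : α) :
    #{π : Perm α | Avoids R π} ≤
      Fintype.card α * #{π : Perm α | π i = j ∧ Avoids (R.erase (i, j)) π} +
        #R * (Fintype.card α - 2)! := by
  rw [← card_filter_add_card_filter_not fun π : Perm α => (π⁻¹ j, π i) ∈ R.erase (i, j),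
    add_comm]
  gcongr
  · calc _ ≤ #((univ.filter fun π : Perm α => π i = j ∧ Avoids (R.erase (i, j)) π) ×ˢ univ) := by
          refine card_le_card_of_injOn (fun π => (π * swap i (π⁻¹ j), π⁻¹ j)) ?_ ?_
          · intro π hπ
            simp only [coe_filter, mem_filter, mem_univ, true_and, Set.mem_ofPred_eq] at hπ
            exact mem_product.2
              ⟨mem_filter.2 ⟨mem_univ _, by simp, hπ.1.mul_swap hπ.2⟩, mem_univ _⟩
          · intro π _ σ _ h
            obtain ⟨h₁, h₂⟩ := Prod.mk.inj h
            rw [h₂] at h₁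
            exact mul_right_cancel h₁
      _ = _ := by rw [card_product, Finset.card_univ, mul_comm]
  · exact (card_le_card (filter_subset_filter _ (subset_univ _))).trans
      ((card_inv_apply_apply_mem_le (notMem_erase _ _)).trans
        (Nat.mul_le_mul_right _ card_erase_le))

end Equiv.Perm

theorem half_mul_factorial_pred_le {n A G r : ℕ} {C γ : ℝ} (hγ : 0 < γ) (hn₂ : 2 ≤ n)
    (hn : 8 * C / γ + 2 ≤ n) (hr : (r : ℝ) ≤ C * n) (hA : γ * n ! ≤ A)
    (hcount : A ≤ n * G + r * (n - 2)!) : γ / 2 * (n - 1)! ≤ G := by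
  obtain ⟨m, rfl⟩ : ∃ m, n = m + 2 := ⟨n - 2, by omega⟩
  have hfac₁ : ((m + 2 - 1)! : ℝ) = (m + 1) * m ! := by
    rw [show m + 2 - 1 = m + 1 by omega, Nat.factorial_succ]; push_cast; ring
  have hfac₂ : ((m + 2)! : ℝ) = (m + 2) * ((m + 1) * m !) := by
    rw [Nat.factorial_succ, Nat.factorial_succ]; push_cast; ring
  have hcount' : (A : ℝ) ≤ (m + 2) * G + r * m ! := by exact_mod_cast hcount
  rw [hfac₂] at hA
  rw [hfac₁]
  push_cast at hr hn
  have h8C : 8 * C ≤ γ * m := by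
    rw [div_add' _ _ _ hγ.ne', div_le_iff₀ hγ] at hn
    linarith
  have hf : (0 : ℝ) < m ! := by positivity
  have hrf : (r : ℝ) * m ! ≤ (m + 2) * (C * m !) := by nlinarith
  have hG : γ * ((m + 1) * m !) ≤ G + C * m ! :=
    le_of_mul_le_mul_left (by linarith) (by positivity : (0 : ℝ) < m + 2)
  have hCf : C * m ! ≤ γ / 2 * ((m + 1) * m !) := by nlinarith
  linarith

theorem stmt6_general (n : ℕ) (C γ : ℝ) (hγ : 0 < γ)
    (R : Finset (Fin n × Fin n)) (hR : (R.card : ℝ) ≤ C * n)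
    (havoid : γ ≤
      ((Finset.univ.filter fun π : Equiv.Perm (Fin n) => ∀ k, (k, π k) ∉ R).card : ℝ)
        / (n.factorial : ℝ))
    (hn : 8 * C / γ + 2 ≤ (n : ℝ)) (i j : Fin n) :
    γ / 2 ≤
      ((Finset.univ.filter fun π : Equiv.Perm (Fin n) =>
          π i = j ∧ ∀ k, (k, π k) ∉ R.erase (i, j)).card : ℝ)
        / ((n - 1).factorial : ℝ) := by
  have hC : 0 ≤ C :=
    nonneg_of_mul_nonneg_left ((Nat.cast_nonneg _).trans hR) (Nat.cast_pos.2 i.pos)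
  have hn₂ : 2 ≤ n := by
    have : (2 : ℝ) ≤ n := by linarith [show 0 ≤ 8 * C / γ by positivity]
    exact_mod_cast this
  have hcount := Equiv.Perm.card_avoids_le R i j
  rw [Fintype.card_fin] at hcount
  rw [le_div_iff₀ (by positivity)] at havoid ⊢
  refine half_mul_factorial_pred_le hγ hn₂ hn hR havoid ?_
  -- the statement decides `∀ k : Fin n` by `decidableForallFin`, not by the generic instance
  convert hcount using 5

theorem stmt6 (n : ℕ) (C γ : ℝ) (hC : 0 < C) (hγ : 0 < γ)
    (R : Finset (Fin n × Fin n)) (hR : (R.card : ℝ) ≤ C * n)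
    (havoid : γ ≤
      ((Finset.univ.filter fun π : Equiv.Perm (Fin n) => ∀ k, (k, π k) ∉ R).card : ℝ)
        / (n.factorial : ℝ))
    (hn : 8 * C / γ + 2 ≤ (n : ℝ)) (i j : Fin n) :
    γ / 2 ≤
      ((Finset.univ.filter fun π : Equiv.Perm (Fin n) =>
          π i = j ∧ ∀ k, (k, π k) ∉ R.erase (i, j)).card : ℝ)
        / ((n - 1).factorial : ℝ) :=
  stmt6_general n C γ hγ R hR havoid hn i j
end

section
/- Let f : S_n → ℝ be linear, f = Σ_{i,j} c_{i,j} x_{i,j}, and suppose dist(f(π), {0,1}) ≤ ε for all π ∈ S_n. Then for all i_1, i_2, j_1, j_2 ∈ [n], the quantity d = c_{i_1,j_1} + c_{i_2,j_2} − c_{i_1,j_2} − c_{i_2,j_1} satisfies dist(d, {0, 1, −1}) ≤ 2ε. -/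
/-!
For distinct `i₁, i₂` and `j₁, j₂`, take a permutation `α` with `α i₁ = j₁`, `α i₂ = j₂`; composing
with the transposition of `i₁, i₂` changes the linear form `∑ i, c i (π i)` by exactly
`d = c i₁ j₁ + c i₂ j₂ - c i₁ j₂ - c i₂ j₁`. Both values lie within `ε` of `{0, 1}`, so their
difference `d` lies within `2ε` of `{0, 1, -1}`. If `i₁ = i₂` or `j₁ = j₂` then `d = 0`.
-/

open Equiv

theorem sum_apply_sub_sum_apply_swap {ι κ R : Type*} [Fintype ι] [DecidableEq ι]
    [AddCommGroup R] (c : ι → κ → R) (σ : ι → κ) {i₁ i₂ : ι} (h : i₁ ≠ i₂) :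
    ∑ i, c i (σ i) - ∑ i, c i (σ (swap i₁ i₂ i)) =
      c i₁ (σ i₁) + c i₂ (σ i₂) - c i₁ (σ i₂) - c i₂ (σ i₁) := by
  rw [← Finset.sum_sub_distrib, Fintype.sum_eq_add i₁ i₂ h, swap_apply_left, swap_apply_right]
  · abel
  · rintro i ⟨hi₁, hi₂⟩
    rw [swap_apply_of_ne_of_ne hi₁ hi₂, sub_self]

theorem min_abs_sub_le_two_mul {R : Type*} [Ring R] [LinearOrder R] [IsOrderedRing R]
    {a b ε : R} (ha : min |a| |a - 1| ≤ ε) (hb : min |b| |b - 1| ≤ ε) :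
    min |a - b| (min |a - b - 1| |a - b + 1|) ≤ 2 * ε := by
  rw [two_mul]
  rcases min_le_iff.mp ha with ha | ha <;> rcases min_le_iff.mp hb with hb | hb
  · exact min_le_of_left_le ((abs_sub a b).trans (add_le_add ha hb))
  · refine min_le_of_right_le (min_le_of_right_le ?_)
    rw [show a - b + 1 = a - (b - 1) by abel]
    exact (abs_sub a (b - 1)).trans (add_le_add ha hb)
  · refine min_le_of_right_le (min_le_of_left_le ?_)
    rw [show a - b - 1 = a - 1 - b by abel]
    exact (abs_sub (a - 1) b).trans (add_le_add ha hb)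
  · refine min_le_of_left_le ?_
    rw [show a - b = a - 1 - (b - 1) by abel]
    exact (abs_sub (a - 1) (b - 1)).trans (add_le_add ha hb)

theorem stmt17 (n : ℕ) (c : Fin n → Fin n → ℝ)
    (f : Equiv.Perm (Fin n) → ℝ)
    (hf : ∀ π, f π = ∑ i, c i (π i))
    (ε : ℝ) (hdist : ∀ π, min |f π| |f π - 1| ≤ ε)
    (i1 i2 j1 j2 : Fin n) :
    min |c i1 j1 + c i2 j2 - c i1 j2 - c i2 j1|
      (min |c i1 j1 + c i2 j2 - c i1 j2 - c i2 j1 - 1|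
           |c i1 j1 + c i2 j2 - c i1 j2 - c i2 j1 + 1|) ≤ 2 * ε := by
  by_cases hdeg : i1 = i2 ∨ j1 = j2
  · have hε : 0 ≤ ε := (le_min (abs_nonneg _) (abs_nonneg _)).trans (hdist 1)
    refine min_le_of_left_le ?_
    rcases hdeg with rfl | rfl <;> simpa using hε
  obtain ⟨hi, hj⟩ := not_or.mp hdeg
  obtain ⟨α, hα₁, hα₂⟩ :=
    MulAction.is_two_pretransitive_iff.mp (Perm.isMultiplyPretransitive (Fin n) 2) hi hj
  rw [Perm.smul_def] at hα₁ hα₂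
  have hdiff : f α - f (α * swap i1 i2) = c i1 j1 + c i2 j2 - c i1 j2 - c i2 j1 := by
    simp only [hf, Perm.mul_apply]
    rw [sum_apply_sub_sum_apply_swap c α hi, hα₁, hα₂]
  simpa only [hdiff] using min_abs_sub_le_two_mul (hdist α) (hdist (α * swap i1 i2))
end

section
/- Let f : S_n → ℝ be linear with dist(f(π), {0,1}) ≤ ε for all π ∈ S_n, where ε < 1/6, and for squares {i_1,i_2}×{j_1,j_2} (i_1≠i_2, j_1≠j_2) write d_{i_1,i_2,j_1,j_2} = c_{i_1,j_1}+c_{i_2,j_2}−c_{i_1,j_2}−c_{i_2,j_1}. Then for any two compatible squares σ_1, σ_2 (disjoint row sets and disjoint column sets), at most one of round(d_{σ_1},{0,±1}), round(d_{σ_2},{0,±1}) is nonzero. -/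
/-! Extend the two squares to a permutation σ with σ iₖ = jₖ. Composing σ with the transpositions
(i1 i2) and (i3 i4) yields pairs of permutations whose values of f differ by d₁, d₂, d₁ + d₂ and
d₁ - d₂. A difference of two values of f lies within 2ε of {-1, 0, 1}, so it has absolute value at
most 1 + 2ε. If both roundings were nonzero, then |d₁|, |d₂| ≥ 1 - 2ε, and the larger of
|d₁ ± d₂| would be |d₁| + |d₂| ≥ 2 - 4ε > 1 + 2ε, since ε < 1/6. -/

open Equiv Function

variable {α : Type*}

lemma injective_vecCons_of_pair_inter_pair_eq_empty {a b c d : α} (hab : a ≠ b) (hcd : c ≠ d)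
    (h : ({a, b} : Set α) ∩ {c, d} = ∅) : Injective ![a, b, c, d] := by
  have hne : ∀ x ∈ ({a, b} : Set α), ∀ y ∈ ({c, d} : Set α), x ≠ y :=
    Set.disjoint_iff_forall_ne.1 (Set.disjoint_iff_inter_eq_empty.2 h)
  have := hne a (by simp) c (by simp)
  have := hne a (by simp) d (by simp)
  have := hne b (by simp) c (by simp)
  have := hne b (by simp) d (by simp)
  intro i j
  fin_cases i <;> fin_cases j <;> simp_all [eq_comm]

lemma Fintype.sum_sub_sum_comp_swap [Fintype α] [DecidableEq α] {β : Type*} (c : α → β → ℝ)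
    {π : α → β} {a b : α} {ja jb : β} (hab : a ≠ b) (ha : π a = ja) (hb : π b = jb) :
    ∑ i, c i (π i) - ∑ i, c i (π (swap a b i)) = c a ja + c b jb - c a jb - c b ja := by
  rw [← Finset.sum_sub_distrib, Fintype.sum_eq_add a b hab]
  · simp only [swap_apply_left, swap_apply_right, ha, hb]
    ring
  · rintro x ⟨hxa, hxb⟩
    rw [swap_apply_of_ne_of_ne hxa hxb, sub_self]

lemma exists_abs_sub_sub_le_of_min_abs_le {x y ε : ℝ} (hx : min |x| |x - 1| ≤ ε)
    (hy : min |y| |y - 1| ≤ ε) : ∃ v ∈ ({-1, 0, 1} : Set ℝ), |x - y - v| ≤ 2 * ε := by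
  rw [min_le_iff, abs_le, abs_le] at hx hy
  rcases hx with hx | hx <;> rcases hy with hy | hy
  · exact ⟨0, by simp, abs_le.2 ⟨by linarith, by linarith⟩⟩
  · exact ⟨-1, by simp, abs_le.2 ⟨by linarith, by linarith⟩⟩
  · exact ⟨1, by simp, abs_le.2 ⟨by linarith, by linarith⟩⟩
  · exact ⟨0, by simp, abs_le.2 ⟨by linarith, by linarith⟩⟩

lemma abs_le_one_of_mem_neg_one_zero_one {v : ℝ} (hv : v ∈ ({-1, 0, 1} : Set ℝ)) : |v| ≤ 1 := by
  rcases hv with rfl | rfl | rfl <;> norm_num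

lemma abs_sub_le_of_min_abs_le {x y ε : ℝ} (hx : min |x| |x - 1| ≤ ε)
    (hy : min |y| |y - 1| ≤ ε) : |x - y| ≤ 1 + 2 * ε := by
  obtain ⟨v, hv, hxy⟩ := exists_abs_sub_sub_le_of_min_abs_le hx hy
  calc |x - y| = |v + (x - y - v)| := by ring_nf
    _ ≤ |v| + |x - y - v| := abs_add_le _ _
    _ ≤ 1 + 2 * ε := add_le_add (abs_le_one_of_mem_neg_one_zero_one hv) hxy

lemma one_sub_le_abs_of_nearest {d r v δ : ℝ}
    (hr : r ∈ ({-1, 0, 1} : Set ℝ) ∧ ∀ v ∈ ({-1, 0, 1} : Set ℝ), |d - r| ≤ |d - v|)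
    (hr0 : r ≠ 0) (hv : v ∈ ({-1, 0, 1} : Set ℝ)) (hdv : |d - v| ≤ δ) : 1 - δ ≤ |d| := by
  have habs : |r| = 1 := by
    rcases hr.1 with rfl | rfl | rfl <;> simp_all
  linarith [abs_sub_abs_le_abs_sub r d, abs_sub_comm d r, (hr.2 v hv).trans hdv]

lemma abs_add_abs_le_max_abs_add_abs_sub (a b : ℝ) : |a| + |b| ≤ max |a + b| |a - b| := by
  have := le_abs_self (a + b); have := neg_abs_le (a + b)
  have := le_abs_self (a - b); have := neg_abs_le (a - b)
  rw [le_max_iff]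
  rcases abs_cases a with ⟨ha, _⟩ | ⟨ha, _⟩ <;> rcases abs_cases b with ⟨hb, _⟩ | ⟨hb, _⟩ <;>
    first | left; linarith | right; linarith

lemma eq_zero_or_eq_zero_of_abs_add_le_of_abs_sub_le {d₁ d₂ r₁ r₂ ε : ℝ} (hε : ε < 1 / 6)
    (hr₁ : r₁ ∈ ({-1, 0, 1} : Set ℝ) ∧ ∀ v ∈ ({-1, 0, 1} : Set ℝ), |d₁ - r₁| ≤ |d₁ - v|)
    (hr₂ : r₂ ∈ ({-1, 0, 1} : Set ℝ) ∧ ∀ v ∈ ({-1, 0, 1} : Set ℝ), |d₂ - r₂| ≤ |d₂ - v|)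
    (hd₁ : ∃ v ∈ ({-1, 0, 1} : Set ℝ), |d₁ - v| ≤ 2 * ε)
    (hd₂ : ∃ v ∈ ({-1, 0, 1} : Set ℝ), |d₂ - v| ≤ 2 * ε)
    (hadd : |d₁ + d₂| ≤ 1 + 2 * ε) (hsub : |d₁ - d₂| ≤ 1 + 2 * ε) : r₁ = 0 ∨ r₂ = 0 := by
  by_contra! ⟨h₁, h₂⟩
  obtain ⟨v₁, hv₁, hdv₁⟩ := hd₁
  obtain ⟨v₂, hv₂, hdv₂⟩ := hd₂
  have := one_sub_le_abs_of_nearest hr₁ h₁ hv₁ hdv₁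
  have := one_sub_le_abs_of_nearest hr₂ h₂ hv₂ hdv₂
  have := abs_add_abs_le_max_abs_add_abs_sub d₁ d₂
  have := max_le hadd hsub
  linarith

theorem stmt18 (n : ℕ) (c : Fin n → Fin n → ℝ)
    (f : Equiv.Perm (Fin n) → ℝ)
    (hf : ∀ π, f π = ∑ i, c i (π i))
    (ε : ℝ) (hε : ε < 1 / 6)
    (hdist : ∀ π, min |f π| |f π - 1| ≤ ε)
    (i1 i2 j1 j2 i3 i4 j3 j4 : Fin n)
    (h12 : i1 ≠ i2) (h34 : i3 ≠ i4) (g12 : j1 ≠ j2) (g34 : j3 ≠ j4)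
    (hcomp : ({i1, i2} : Set (Fin n)) ∩ {i3, i4} = ∅ ∧
             ({j1, j2} : Set (Fin n)) ∩ {j3, j4} = ∅)
    (r1 r2 : ℝ)
    (hr1 : r1 ∈ ({-1, 0, 1} : Set ℝ) ∧ ∀ v ∈ ({-1, 0, 1} : Set ℝ),
      |(c i1 j1 + c i2 j2 - c i1 j2 - c i2 j1) - r1| ≤
        |(c i1 j1 + c i2 j2 - c i1 j2 - c i2 j1) - v|)
    (hr2 : r2 ∈ ({-1, 0, 1} : Set ℝ) ∧ ∀ v ∈ ({-1, 0, 1} : Set ℝ),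
      |(c i3 j3 + c i4 j4 - c i3 j4 - c i4 j3) - r2| ≤
        |(c i3 j3 + c i4 j4 - c i3 j4 - c i4 j3) - v|) :
    r1 = 0 ∨ r2 = 0 := by
  have hswap {π : Perm (Fin n)} {a b ja jb : Fin n} (hab : a ≠ b) (ha : π a = ja) (hb : π b = jb) :
      f π - f (π * swap a b) = c a ja + c b jb - c a jb - c b ja := by
    rw [hf, hf]
    exact Fintype.sum_sub_sum_comp_swap c hab ha hb
  have hi := injective_vecCons_of_pair_inter_pair_eq_empty h12 h34 hcomp.1
  obtain ⟨σ, hσ⟩ := Perm.exists_extending_pair _ _ hi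
    (injective_vecCons_of_pair_inter_pair_eq_empty g12 g34 hcomp.2)
  set τ := σ * swap i3 i4
  have hτ (k : Fin 4) (hk₂ : k ≠ 2) (hk₃ : k ≠ 3) : τ (![i1, i2, i3, i4] k) = ![j1, j2, j3, j4] k :=
    (congrArg σ (swap_apply_of_ne_of_ne (hi.ne hk₂) (hi.ne hk₃))).trans (hσ k)
  have hσ₁ : σ i1 = j1 := hσ 0
  have hσ₂ : σ i2 = j2 := hσ 1
  have hσ₃ : σ i3 = j3 := hσ 2
  have hσ₄ : σ i4 = j4 := hσ 3
  have hτ₁ : τ i1 = j1 := hτ 0 (by decide) (by decide)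
  have hτ₂ : τ i2 = j2 := hτ 1 (by decide) (by decide)
  have hd₁ := hswap h12 hσ₁ hσ₂
  have hd₂ := hswap h34 hσ₃ hσ₄
  have hd₁' := hswap h12 hτ₁ hτ₂
  refine eq_zero_or_eq_zero_of_abs_add_le_of_abs_sub_le hε hr1 hr2 ?_ ?_ ?_ ?_
  · exact hd₁ ▸ exists_abs_sub_sub_le_of_min_abs_le (hdist _) (hdist _)
  · exact hd₂ ▸ exists_abs_sub_sub_le_of_min_abs_le (hdist _) (hdist _)
  · convert abs_sub_le_of_min_abs_le (hdist σ) (hdist (τ * swap i1 i2)) using 2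
    linarith
  · convert abs_sub_le_of_min_abs_le (hdist τ) (hdist (σ * swap i1 i2)) using 2
    linarith
end
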